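/- Let 𝔸 be an algebra, S a nonempty finite set, and R ⊆ A^(2^S) an |S|-dimensional tolerance of 𝔸. Then for each i ∈ S, the relation R^{∘ᵢ} obtained by replacing faces_i(R) with its transitive closure (as a binary relation on A^(2^(S∖{i}))) is again an |S|-dimensional tolerance of 𝔸, and R ⊆ R^{∘ᵢ}. -/

import Mathlib

/-- `j`-th face of an `S`-cube in direction `i`, encoded as the cube constant
in direction `i`. -/
def face {A S : Type*} [DecidableEq S] (i : S) (j : Fin 2) (γ : (S → Fin 2) → A) :
    (S → Fin 2) → A :=
  fun f => γ (Function.update f i j)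

/-- `faces_i(R)`. -/
def facesRel {A S : Type*} [DecidableEq S] (i : S) (R : Set ((S → Fin 2) → A)) :
    Set (((S → Fin 2) → A) × ((S → Fin 2) → A)) :=
  {p | ∃ γ ∈ R, p.1 = face i 0 γ ∧ p.2 = face i 1 γ}

/-- `R` is an `|S|`-dimensional tolerance of the algebra `(A, ops)`:
`(S)`-reflexive, `(S)`-symmetric and compatible with the basic operations. -/
def IsTolerance {A S : Type*} [DecidableEq S] {ι : Type*} {arity : ι → ℕ}
    (ops : ∀ i : ι, (Fin (arity i) → A) → A) (R : Set ((S → Fin 2) → A)) : Prop :=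
  (∀ j : S, ∀ a b, (a, b) ∈ facesRel j R →
      (a, a) ∈ facesRel j R ∧ (b, b) ∈ facesRel j R) ∧
  (∀ j : S, ∀ a b, (a, b) ∈ facesRel j R → (b, a) ∈ facesRel j R) ∧
  (∀ (i : ι) (γs : Fin (arity i) → (S → Fin 2) → A),
      (∀ j, γs j ∈ R) → (fun f => ops i (fun j => γs j f)) ∈ R)

/-- `R^{∘ᵢ}`: replace `faces_i(R)` by its transitive closure and glue back;
a cube belongs to it iff its pair of `i`-faces lies in the transitive closure of
`faces_i(R)`. -/
def transCloseDir {A S : Type*} [DecidableEq S] (i : S) (R : Set ((S → Fin 2) → A)) :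
    Set ((S → Fin 2) → A) :=
  {γ | Relation.TransGen (fun a b => (a, b) ∈ facesRel i R) (face i 0 γ) (face i 1 γ)}

section ChainAux

variable {X : Type*} {r : X → X → Prop}

/-- chains of exactly `n+1` steps of `r`. -/
def stmt8Chain (r : X → X → Prop) : ℕ → X → X → Prop
  | 0, a, b => r a b
  | n+1, a, b => ∃ c, r a c ∧ stmt8Chain r n c b

lemma stmt8Chain_transGen {n a b} (h : stmt8Chain r n a b) :
    Relation.TransGen r a b := by
  induction n generalizing a with
  | zero => exact .single h
  | succ n ih => obtain ⟨c, h1, h2⟩ := h; exact .head h1 (ih h2)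

lemma stmt8Chain_snoc {n a b c} (h : stmt8Chain r n a b) (h' : r b c) :
    stmt8Chain r (n+1) a c := by
  induction n generalizing a with
  | zero => exact ⟨b, h, h'⟩
  | succ n ih => obtain ⟨d, h1, h2⟩ := h; exact ⟨d, h1, ih h2⟩

lemma stmt8_transGen_chain {a b} (h : Relation.TransGen r a b) :
    ∃ n, stmt8Chain r n a b := by
  induction h with
  | single h => exact ⟨0, h⟩
  | tail _ h ih => obtain ⟨n, hn⟩ := ih; exact ⟨n+1, stmt8Chain_snoc hn h⟩

lemma stmt8Chain_first {n a b} (h : stmt8Chain r n a b) : ∃ c, r a c := by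
  cases n with
  | zero => exact ⟨b, h⟩
  | succ n => obtain ⟨c, h1, _⟩ := h; exact ⟨c, h1⟩

lemma stmt8Chain_pad (hq : ∀ a b, r a b → r a a) {n a b}
    (h : stmt8Chain r n a b) : stmt8Chain r (n+1) a b := by
  obtain ⟨c, hc⟩ := stmt8Chain_first h
  exact ⟨a, hq a c hc, h⟩

lemma stmt8Chain_le (hq : ∀ a b, r a b → r a a) {n m a b} (hnm : n ≤ m)
    (h : stmt8Chain r n a b) : stmt8Chain r m a b := by
  induction m, hnm using Nat.le_induction with
  | base => exact h
  | succ m _ ih => exact stmt8Chain_pad hq ih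

lemma stmt8_transGen_symm (hs : ∀ a b, r a b → r b a) {a b}
    (h : Relation.TransGen r a b) : Relation.TransGen r b a := by
  induction h with
  | single h => exact .single (hs _ _ h)
  | tail _ h ih => exact .head (hs _ _ h) ih

lemma stmt8_transGen_last {a b} (h : Relation.TransGen r a b) : ∃ c, r c b := by
  cases h with
  | single h => exact ⟨a, h⟩
  | tail _ h => exact ⟨_, h⟩

lemma stmt8_transGen_first {a b} (h : Relation.TransGen r a b) : ∃ c, r a c := by
  obtain ⟨n, hn⟩ := stmt8_transGen_chain h
  exact stmt8Chain_first hn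

end ChainAux

section FaceAux

variable {A S : Type*} [DecidableEq S]

lemma stmt8_face_face (j : S) (m k : Fin 2) (γ : (S → Fin 2) → A) :
    face j m (face j k γ) = face j k γ := by
  funext f
  simp [face, Function.update_idem]

lemma stmt8_face_comm {i j : S} (h : i ≠ j) (m k : Fin 2) (γ : (S → Fin 2) → A) :
    face i m (face j k γ) = face j k (face i m γ) := by
  funext f
  show γ (Function.update (Function.update f i m) j k)
      = γ (Function.update (Function.update f j k) i m)
  rw [Function.update_comm h]

lemma stmt8_eq_of_faces {j : S} {γ δ : (S → Fin 2) → A}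
    (h0 : face j 0 γ = face j 0 δ) (h1 : face j 1 γ = face j 1 δ) : γ = δ := by
  funext f
  have hf : γ (Function.update f j (f j)) = δ (Function.update f j (f j)) := by
    have h2 : f j = 0 ∨ f j = 1 := by omega
    rcases h2 with h | h
    · rw [h]; exact congrFun h0 f
    · rw [h]; exact congrFun h1 f
  simpa [Function.update_eq_self] using hf

/-- `j`-flip of a cube. -/
def stmt8Flip (j : S) (γ : (S → Fin 2) → A) : (S → Fin 2) → A :=
  fun f => γ (Function.update f j (if f j = 0 then 1 else 0))

lemma stmt8_face_flip (j : S) (m : Fin 2) (γ : (S → Fin 2) → A) :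
    face j m (stmt8Flip j γ) = face j (if m = 0 then 1 else 0) γ := by
  funext f
  show γ (Function.update (Function.update f j m) j
      (if (Function.update f j m) j = 0 then 1 else 0)) = _
  rw [Function.update_self, Function.update_idem]
  rfl

lemma stmt8_face_flip_comm {i j : S} (h : i ≠ j) (m : Fin 2) (γ : (S → Fin 2) → A) :
    face i m (stmt8Flip j γ) = stmt8Flip j (face i m γ) := by
  funext f
  show γ (Function.update (Function.update f i m) j
      (if (Function.update f i m) j = 0 then 1 else 0))
    = γ (Function.update (Function.update f j (if f j = 0 then 1 else 0)) i m)
  rw [Function.update_of_ne (Ne.symm h), Function.update_comm h]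

end FaceAux

section RelAux

variable {A S : Type*} [DecidableEq S] {ι : Type*} {arity : ι → ℕ}
  {ops : ∀ i : ι, (Fin (arity i) → A) → A} {R : Set ((S → Fin 2) → A)}

/-- the faces-in-direction-`k` map sends one step of `facesRel i R`
to one step of `facesRel i R`, for `k` in a different direction `j ≠ i`. -/
lemma stmt8_step_face (hR : IsTolerance ops R) {i j : S} (hij : j ≠ i) (k : Fin 2)
    {c d : (S → Fin 2) → A} (h : (c, d) ∈ facesRel i R) :
    (face j k c, face j k d) ∈ facesRel i R := by
  obtain ⟨ε, hε, hc0, hd0⟩ := h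
  have hc : c = face i 0 ε := hc0
  have hd : d = face i 1 ε := hd0
  have hfj : (face j 0 ε, face j 1 ε) ∈ facesRel j R := ⟨ε, hε, rfl, rfl⟩
  have hq := hR.1 j _ _ hfj
  have h2 : k = 0 ∨ k = 1 := by omega
  have key : ∃ η ∈ R, η = face j k ε := by
    rcases h2 with hk | hk
    · obtain ⟨η, hη, h00, h10⟩ := hq.1
      have h0 : face j 0 ε = face j 0 η := h00
      have h1 : face j 0 ε = face j 1 η := h10
      refine ⟨η, hη, stmt8_eq_of_faces (j := j) ?_ ?_⟩
      · rw [← h0, hk, stmt8_face_face]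
      · rw [← h1, hk, stmt8_face_face]
    · obtain ⟨η, hη, h00, h10⟩ := hq.2
      have h0 : face j 1 ε = face j 0 η := h00
      have h1 : face j 1 ε = face j 1 η := h10
      refine ⟨η, hη, stmt8_eq_of_faces (j := j) ?_ ?_⟩
      · rw [← h0, hk, stmt8_face_face]
      · rw [← h1, hk, stmt8_face_face]
  obtain ⟨η, hη, hηeq⟩ := key
  refine ⟨η, hη, ?_, ?_⟩
  · show face j k c = face i 0 η
    rw [hc, hηeq, stmt8_face_comm (Ne.symm hij)]
  · show face j k d = face i 1 η
    rw [hd, hηeq, stmt8_face_comm (Ne.symm hij)]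

/-- the `j`-flip map sends one step of `facesRel i R` to one step. -/
lemma stmt8_step_flip (hR : IsTolerance ops R) {i j : S} (hij : j ≠ i)
    {c d : (S → Fin 2) → A} (h : (c, d) ∈ facesRel i R) :
    (stmt8Flip j c, stmt8Flip j d) ∈ facesRel i R := by
  obtain ⟨ε, hε, hc0, hd0⟩ := h
  have hc : c = face i 0 ε := hc0
  have hd : d = face i 1 ε := hd0
  have hfj : (face j 0 ε, face j 1 ε) ∈ facesRel j R := ⟨ε, hε, rfl, rfl⟩
  obtain ⟨η, hη, h00, h10⟩ := hR.2.1 j _ _ hfj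
  have h0 : face j 1 ε = face j 0 η := h00
  have h1 : face j 0 ε = face j 1 η := h10
  have hηeq : η = stmt8Flip j ε := by
    refine stmt8_eq_of_faces (j := j) ?_ ?_
    · rw [← h0, stmt8_face_flip]; norm_num
    · rw [← h1, stmt8_face_flip]; norm_num
  refine ⟨η, hη, ?_, ?_⟩
  · show stmt8Flip j c = face i 0 η
    rw [hc, hηeq, stmt8_face_flip_comm (Ne.symm hij)]
  · show stmt8Flip j d = face i 1 η
    rw [hd, hηeq, stmt8_face_flip_comm (Ne.symm hij)]

/-- combining steps with an operation. -/
lemma stmt8_step_comb (hR : IsTolerance ops R) (i : S) (k : ι)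
    {a b : Fin (arity k) → (S → Fin 2) → A}
    (h : ∀ j, (a j, b j) ∈ facesRel i R) :
    ((fun f => ops k fun j => a j f), (fun f => ops k fun j => b j f)) ∈ facesRel i R := by
  choose ε hε ha hb using h
  refine ⟨fun f => ops k fun j => ε j f, hR.2.2 k ε hε, ?_, ?_⟩
  · show (fun f => ops k fun j => a j f) = face i 0 _
    funext f
    show ops k (fun j => a j f) = ops k (fun j => ε j (Function.update f i 0))
    congr 1; funext j; exact congrFun (ha j) f
  · show (fun f => ops k fun j => b j f) = face i 1 _
    funext f
    show ops k (fun j => b j f) = ops k (fun j => ε j (Function.update f i 1))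
    congr 1; funext j; exact congrFun (hb j) f

lemma stmt8_chain_comb (hR : IsTolerance ops R) (i : S) (k : ι) (n : ℕ)
    {a b : Fin (arity k) → (S → Fin 2) → A}
    (h : ∀ j, stmt8Chain (fun a b => (a, b) ∈ facesRel i R) n (a j) (b j)) :
    stmt8Chain (fun a b => (a, b) ∈ facesRel i R) n
      (fun f => ops k fun j => a j f) (fun f => ops k fun j => b j f) := by
  induction n generalizing a with
  | zero => exact stmt8_step_comb hR i k h
  | succ n ih =>
    choose c hc hcb using h
    exact ⟨fun f => ops k fun j => c j f, stmt8_step_comb hR i k hc, ih hcb⟩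

end RelAux

theorem stmt_8 {A S : Type*} [Fintype S] [DecidableEq S] [Nonempty S]
    {ι : Type*} {arity : ι → ℕ}
    (ops : ∀ i : ι, (Fin (arity i) → A) → A)
    (R : Set ((S → Fin 2) → A)) (hR : IsTolerance ops R) (i : S) :
    IsTolerance ops (transCloseDir i R) ∧ R ⊆ transCloseDir i R := by
  classical
  have hq : ∀ a b, (fun a b => (a, b) ∈ facesRel i R) a b →
      (fun a b => (a, b) ∈ facesRel i R) a a := fun a b h => (hR.1 i a b h).1
  have hsub : R ⊆ transCloseDir i R := by
    intro γ hγ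
    exact Relation.TransGen.single ⟨γ, hγ, rfl, rfl⟩
  refine ⟨⟨?_, ?_, ?_⟩, hsub⟩
  · -- quasireflexivity
    rintro j a b ⟨γ, hγ, ha0, hb0⟩
    have hγ' : Relation.TransGen (fun a b => (a, b) ∈ facesRel i R)
        (face i 0 γ) (face i 1 γ) := hγ
    have ha : a = face j 0 γ := ha0
    have hb : b = face j 1 γ := hb0
    by_cases hji : j = i
    · subst hji
      have hab : Relation.TransGen (fun a b => (a, b) ∈ facesRel j R) a b := by
        rw [ha, hb]; exact hγ'
      constructor
      · refine ⟨a, ?_, ?_, ?_⟩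
        · show Relation.TransGen _ (face j 0 a) (face j 1 a)
          rw [ha, stmt8_face_face, stmt8_face_face, ← ha]
          obtain ⟨c, hc⟩ := stmt8_transGen_first hab
          exact Relation.TransGen.single (hR.1 j a c hc).1
        · show a = face j 0 a
          rw [ha, stmt8_face_face]
        · show a = face j 1 a
          rw [ha, stmt8_face_face]
      · refine ⟨b, ?_, ?_, ?_⟩
        · show Relation.TransGen _ (face j 0 b) (face j 1 b)
          rw [hb, stmt8_face_face, stmt8_face_face, ← hb]
          obtain ⟨c, hc⟩ := stmt8_transGen_last hab
          exact Relation.TransGen.single (hR.1 j c b hc).2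
        · show b = face j 0 b
          rw [hb, stmt8_face_face]
        · show b = face j 1 b
          rw [hb, stmt8_face_face]
    · constructor
      · refine ⟨face j 0 γ, ?_, ?_, ?_⟩
        · show Relation.TransGen _ (face i 0 (face j 0 γ)) (face i 1 (face j 0 γ))
          rw [stmt8_face_comm (Ne.symm hji), stmt8_face_comm (Ne.symm hji)]
          exact Relation.TransGen.lift (face j 0)
            (fun c d h => stmt8_step_face hR hji 0 h) _ _ hγ'
        · show a = face j 0 (face j 0 γ)
          rw [ha, stmt8_face_face]
        · show a = face j 1 (face j 0 γ)
          rw [ha, stmt8_face_face]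
      · refine ⟨face j 1 γ, ?_, ?_, ?_⟩
        · show Relation.TransGen _ (face i 0 (face j 1 γ)) (face i 1 (face j 1 γ))
          rw [stmt8_face_comm (Ne.symm hji), stmt8_face_comm (Ne.symm hji)]
          exact Relation.TransGen.lift (face j 1)
            (fun c d h => stmt8_step_face hR hji 1 h) _ _ hγ'
        · show b = face j 0 (face j 1 γ)
          rw [hb, stmt8_face_face]
        · show b = face j 1 (face j 1 γ)
          rw [hb, stmt8_face_face]
  · -- symmetry
    rintro j a b ⟨γ, hγ, ha0, hb0⟩
    have hγ' : Relation.TransGen (fun a b => (a, b) ∈ facesRel i R)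
        (face i 0 γ) (face i 1 γ) := hγ
    have ha : a = face j 0 γ := ha0
    have hb : b = face j 1 γ := hb0
    by_cases hji : j = i
    · subst hji
      refine ⟨stmt8Flip j γ, ?_, ?_, ?_⟩
      · show Relation.TransGen _ (face j 0 (stmt8Flip j γ)) (face j 1 (stmt8Flip j γ))
        rw [stmt8_face_flip, stmt8_face_flip]
        norm_num
        exact stmt8_transGen_symm (hR.2.1 j) hγ'
      · show b = face j 0 (stmt8Flip j γ)
        rw [hb, stmt8_face_flip]; norm_num
      · show a = face j 1 (stmt8Flip j γ)
        rw [ha, stmt8_face_flip]; norm_num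
    · refine ⟨stmt8Flip j γ, ?_, ?_, ?_⟩
      · show Relation.TransGen _ (face i 0 (stmt8Flip j γ)) (face i 1 (stmt8Flip j γ))
        rw [stmt8_face_flip_comm (Ne.symm hji), stmt8_face_flip_comm (Ne.symm hji)]
        exact Relation.TransGen.lift (stmt8Flip j)
          (fun c d h => stmt8_step_flip hR hji h) _ _ hγ'
      · show b = face j 0 (stmt8Flip j γ)
        rw [hb, stmt8_face_flip]; norm_num
      · show a = face j 1 (stmt8Flip j γ)
        rw [ha, stmt8_face_flip]; norm_num
  · -- compatibility
    intro k γs hγs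
    have h1 : ∀ j, ∃ n, stmt8Chain (fun a b => (a, b) ∈ facesRel i R) n
        (face i 0 (γs j)) (face i 1 (γs j)) :=
      fun j => stmt8_transGen_chain (hγs j)
    choose n hn using h1
    have hN : ∀ j, stmt8Chain (fun a b => (a, b) ∈ facesRel i R) (Finset.univ.sup n)
        (face i 0 (γs j)) (face i 1 (γs j)) :=
      fun j => stmt8Chain_le hq (Finset.le_sup (Finset.mem_univ j)) (hn j)
    have hc := stmt8_chain_comb hR i k (Finset.univ.sup n) hN
    show Relation.TransGen _ (face i 0 _) (face i 1 _)
    exact stmt8Chain_transGen hc
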